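/- In the region s_ap > s_an with s_ap - s_an < γ_min, the detached clipped dynamic-margin triplet loss L_T^{cd} = (s_an - s_ap) + γ_min is strictly positive and strictly decreasing in s_ap and strictly increasing in s_an; hence gradient descent in this region pushes s_ap down and s_an up (inverting the usual triplet direction). -/

import Mathlib

section
variable {α : Type*} [AddCommGroup α] [PartialOrder α] [IsOrderedAddMonoid α]

theorem strictAnti_sub_add (a c : α) : StrictAnti fun x => a - x + c :=
  fun _ _ h => add_lt_add_left (sub_lt_sub_left h a) c

theorem strictMono_sub_add (a c : α) : StrictMono fun x => x - a + c :=
  fun _ _ h => add_lt_add_left (sub_lt_sub_right h a) c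

end

theorem inverted_region_behavior_general (γmin : ℝ) :
    (∀ s_ap s_an : ℝ, s_ap > s_an → s_ap - s_an < γmin →
      0 < (s_an - s_ap) + γmin) ∧
    (∀ s_an : ℝ, StrictAntiOn (fun s_ap : ℝ => (s_an - s_ap) + γmin)
      {p | p > s_an ∧ p - s_an < γmin}) ∧
    (∀ s_ap : ℝ, StrictMonoOn (fun s_an : ℝ => (s_an - s_ap) + γmin)
      {n | s_ap > n ∧ s_ap - n < γmin}) :=
  ⟨fun _ _ _ hgap => by linarith,
    fun s_an => (strictAnti_sub_add s_an γmin).strictAntiOn _,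
    fun s_ap => (strictMono_sub_add s_ap γmin).strictMonoOn _⟩

theorem inverted_region_behavior (γmin : ℝ) (h0 : 0 < γmin) :
    (∀ s_ap s_an : ℝ, s_ap > s_an → s_ap - s_an < γmin →
      0 < (s_an - s_ap) + γmin) ∧
    (∀ s_an : ℝ, StrictAntiOn (fun s_ap : ℝ => (s_an - s_ap) + γmin)
      {p | p > s_an ∧ p - s_an < γmin}) ∧
    (∀ s_ap : ℝ, StrictMonoOn (fun s_an : ℝ => (s_an - s_ap) + γmin)
      {n | s_ap > n ∧ s_ap - n < γmin}) :=
  inverted_region_behavior_general γmin
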